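/- Define h(a, y) = (2ay√(1-y²)/((a²+1)y² - 1))·(i + (a²y² - 1)/i) for an integer i ≥ 1, with 1/a < y < 1 and a > 1. Then ∂h/∂y - (a/(y(1-y²)))·∂h/∂a = -4a³y⁴/(i√(1-y²)·(y² + a²y² - 1)) < 0. -/

import Mathlib

/-!
Both partial derivatives of `hthr` carry the same polynomial factor `hthrNum` in their numerators,
and the numerator of `∂h/∂y` exceeds it by `-2a²y⁴(y² + a²y² - 1)`. The weight `a / (y(1 - y²))`
turns `∂h/∂a` into exactly the `hthrNum` part of `∂h/∂y`, so only the correction term survives.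
-/

/-- The hyperbolicity threshold of the pantographic orbit `Pan(i,a,h)` as a
function of the two variables `a` and `y`. -/
noncomputable def hthr (i : ℕ) (a y : ℝ) : ℝ :=
  (2 * a * y * Real.sqrt (1 - y ^ 2) / ((a ^ 2 + 1) * y ^ 2 - 1)) *
    (i + (a ^ 2 * y ^ 2 - 1) / i)

def hthrNum (i : ℕ) (a y : ℝ) : ℝ :=
  1 - y ^ 2 - 2 * a ^ 2 * y ^ 2 + 3 * a ^ 2 * y ^ 4 + a ^ 4 * y ^ 4 -
    i ^ 2 * (1 - y ^ 2 + a ^ 2 * y ^ 2)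

theorem hasDerivAt_hthr_a {i : ℕ} (hi : i ≠ 0) {a y : ℝ}
    (hE : y ^ 2 + a ^ 2 * y ^ 2 - 1 ≠ 0) :
    HasDerivAt (fun b => hthr i b y)
      (2 * y * √(1 - y ^ 2) * hthrNum i a y / (i * (y ^ 2 + a ^ 2 * y ^ 2 - 1) ^ 2)) a := by
  have hD : (a ^ 2 + 1) * y ^ 2 - 1 ≠ 0 := fun h => hE (by linear_combination h)
  have hi' : (i : ℝ) ≠ 0 := Nat.cast_ne_zero.mpr hi
  have h := ((((hasDerivAt_id a).const_mul 2).mul_const y).mul_const √(1 - y ^ 2)).div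
    ((((hasDerivAt_pow 2 a).add_const 1).mul_const (y ^ 2)).sub_const 1) hD |>.mul
    ((((hasDerivAt_pow 2 a).mul_const (y ^ 2)).sub_const 1).div_const (i : ℝ) |>.const_add (i : ℝ))
  refine h.congr_deriv ?_
  simp only [hthrNum, id, Pi.div_apply, Nat.cast_ofNat]
  rw [show (a ^ 2 + 1) * y ^ 2 - 1 = y ^ 2 + a ^ 2 * y ^ 2 - 1 by ring]
  field_simp
  ring

theorem hasDerivAt_hthr_y {i : ℕ} (hi : i ≠ 0) {a y : ℝ} (hy : y ^ 2 < 1)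
    (hE : y ^ 2 + a ^ 2 * y ^ 2 - 1 ≠ 0) :
    HasDerivAt (fun z => hthr i a z)
      (2 * a * (hthrNum i a y - 2 * a ^ 2 * y ^ 4 * (y ^ 2 + a ^ 2 * y ^ 2 - 1)) /
        (i * √(1 - y ^ 2) * (y ^ 2 + a ^ 2 * y ^ 2 - 1) ^ 2)) y := by
  have hD : (a ^ 2 + 1) * y ^ 2 - 1 ≠ 0 := fun h => hE (by linear_combination h)
  have hi' : (i : ℝ) ≠ 0 := Nat.cast_ne_zero.mpr hi
  have hs : √(1 - y ^ 2) ≠ 0 := (Real.sqrt_pos.mpr (by linarith)).ne'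
  have hs2 : √(1 - y ^ 2) ^ 2 = 1 - y ^ 2 := Real.sq_sqrt (by linarith)
  have hsqrt := (Real.hasDerivAt_sqrt (by linarith : 1 - y ^ 2 ≠ 0)).comp y
    ((hasDerivAt_pow 2 y).const_sub 1)
  have h := ((((hasDerivAt_id y).const_mul (2 * a)).mul hsqrt).div
    (((hasDerivAt_pow 2 y).const_mul (a ^ 2 + 1)).sub_const 1) hD).mul
    ((((hasDerivAt_pow 2 y).const_mul (a ^ 2)).sub_const 1).div_const (i : ℝ) |>.const_add (i : ℝ))
  refine h.congr_deriv ?_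
  simp only [hthrNum, id, Pi.mul_apply, Pi.div_apply, Function.comp_apply, Nat.cast_ofNat]
  rw [show (a ^ 2 + 1) * y ^ 2 - 1 = y ^ 2 + a ^ 2 * y ^ 2 - 1 by ring]
  field_simp
  rw [hs2]
  ring

theorem weighted_partials_sub_eq {a y s t E P n : ℝ} (hy : y ≠ 0) (hs : s ≠ 0) (hst : s ^ 2 = t)
    (hE : E ≠ 0) (hn : n ≠ 0) :
    2 * a * (P - 2 * a ^ 2 * y ^ 4 * E) / (n * s * E ^ 2) - a / (y * t) * (2 * y * s * P / (n * E ^ 2)) =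
      -4 * a ^ 3 * y ^ 4 / (n * s * E) := by
  subst hst
  field_simp
  ring

theorem stmt_16 (i : ℕ) (hi : 1 ≤ i) (a y : ℝ) (ha : 1 < a)
    (hy₁ : 1 / a < y) (hy₂ : y < 1) (Ha Hy : ℝ)
    (hHa : HasDerivAt (fun b => hthr i b y) Ha a)
    (hHy : HasDerivAt (fun z => hthr i a z) Hy y) :
    Hy - (a / (y * (1 - y ^ 2))) * Ha =
      -4 * a ^ 3 * y ^ 4 /
        (i * Real.sqrt (1 - y ^ 2) * (y ^ 2 + a ^ 2 * y ^ 2 - 1)) ∧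
    Hy - (a / (y * (1 - y ^ 2))) * Ha < 0 := by
  have ha₀ : 0 < a := one_pos.trans ha
  have hay : 1 < a * y := by rwa [div_lt_iff₀' ha₀] at hy₁
  have hy₀ : 0 < y := by nlinarith
  have hy : y ^ 2 < 1 := by nlinarith
  have hE : 0 < y ^ 2 + a ^ 2 * y ^ 2 - 1 := by nlinarith
  have hi₀ : i ≠ 0 := Nat.one_le_iff_ne_zero.mp hi
  have hs : 0 < √(1 - y ^ 2) := Real.sqrt_pos.mpr (by linarith)
  have key : Hy - a / (y * (1 - y ^ 2)) * Ha =
      -4 * a ^ 3 * y ^ 4 / (i * √(1 - y ^ 2) * (y ^ 2 + a ^ 2 * y ^ 2 - 1)) := by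
    rw [hHa.unique (hasDerivAt_hthr_a hi₀ hE.ne'), hHy.unique (hasDerivAt_hthr_y hi₀ hy hE.ne')]
    exact weighted_partials_sub_eq hy₀.ne' hs.ne' (Real.sq_sqrt (by linarith)) hE.ne'
      (Nat.cast_ne_zero.mpr hi₀)
  exact ⟨key, key ▸ div_neg_of_neg_of_pos (by nlinarith) (by positivity)⟩
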